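/- Let σ be a separable permutation with shape(σ) = λ = (λ_1, λ_2, …). Then for any d ≥ 1, there exist d pairwise disjoint increasing subsequences u^1, …, u^d of σ such that |u^i| = λ_i for each 1 ≤ i ≤ d. -/

import Mathlib

/-!
A separable word of length at least two is a direct sum (every letter of the left part below
every letter of the right part) or a skew sum (every letter of the left part above): otherwise
both its inversion graph and the complement are connected, so by Seinsche's theorem the inversion
graph contains an induced path on four vertices, and the only permutations of length four whose
inversion graph is such a path are 3142 and 2413.

Greene's function `greene w` is additive over direct sums. Over skew sums each weakly increasing
subsequence lies in one part, so `greene w` is the max-plus convolution of the Greene functions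
of the parts. By induction, the Greene function of a separable word is concave, and the word has
disjoint weakly increasing subsequences `u 0, u 1, …` with `|u i| = greene w (i+1) - greene w i`:
for a direct sum take `u₁ i ∪ u₂ i`; for a skew sum merge the two families greedily, always
taking the next member with the larger gain, which by concavity attains the convolution at
every stage.
-/

/-- A weakly increasing subsequence of the word `w`, given as a set of positions. -/
def WkInc (w : List ℕ) (S : Finset (Fin w.length)) : Prop :=
  ∀ p ∈ S, ∀ q ∈ S, p < q → w.get p ≤ w.get q

/-- The maximum total number of elements in a union of `d` pairwise disjoint weakly
increasing subsequences of `w`; by Greene's theorem this equals `μ₁ + ⋯ + μ_d` where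
`μ = shape(w)` is the RSK shape of `w`. -/
noncomputable def greene (w : List ℕ) (d : ℕ) : ℕ :=
  sSup {N | ∃ S : Fin d → Finset (Fin w.length),
    (∀ i, WkInc w (S i)) ∧ (∀ i j, i ≠ j → Disjoint (S i) (S j)) ∧
    N = ∑ i, (S i).card}

/-- The `(k+1)`-st part (0-indexed `k`-th part) of the RSK shape of `w`. -/
noncomputable def shapePart (w : List ℕ) (k : ℕ) : ℕ := greene w (k + 1) - greene w k

/-- The word `w` contains the permutation `π` as a pattern. -/
def ContainsPattern {m : ℕ} (π : Equiv.Perm (Fin m)) (w : List ℕ) : Prop :=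
  ∃ f : Fin m → Fin w.length, StrictMono f ∧
    ∀ j k : Fin m,
      (w.get (f j) < w.get (f k) ↔ π j < π k) ∧
      (w.get (f k) < w.get (f j) ↔ π k < π j)

/-- The pattern 3142 (one-line notation), 0-indexed. -/
def p3142 : Equiv.Perm (Fin 4) := ⟨![2,0,3,1], ![1,3,0,2], by decide, by decide⟩

/-- The pattern 2413 (one-line notation), 0-indexed. -/
def p2413 : Equiv.Perm (Fin 4) := ⟨![1,3,0,2], ![2,0,3,1], by decide, by decide⟩

/-- The one-line word of a permutation of `[n] = {1,…,n}`. -/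
def permWord {n : ℕ} (σ : Equiv.Perm (Fin n)) : List ℕ :=
  List.ofFn fun i => (σ i : ℕ) + 1

/-- A permutation is separable iff it avoids both 3142 and 2413. -/
def Separable {n : ℕ} (σ : Equiv.Perm (Fin n)) : Prop :=
  ¬ ContainsPattern p3142 (permWord σ) ∧ ¬ ContainsPattern p2413 (permWord σ)

/-- A (strictly) increasing subsequence of the permutation `σ`, as a set of positions. -/
def IncSubseq {n : ℕ} (σ : Equiv.Perm (Fin n)) (S : Finset (Fin n)) : Prop :=
  ∀ p ∈ S, ∀ q ∈ S, p < q → σ p < σ q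

open Finset Function

section WkIncFamily

variable {w : List ℕ} {ι : Type*}

structure IsWkIncFamily (w : List ℕ) (S : ι → Finset (Fin w.length)) : Prop where
  wkInc : ∀ i, WkInc w (S i)
  pairwise_disjoint : Pairwise (Disjoint on S)

theorem wkInc_empty : WkInc w ∅ := by simp [WkInc]

theorem IsWkIncFamily.comp {κ : Type*} {S : ι → Finset (Fin w.length)} (hS : IsWkIncFamily w S)
    {f : κ → ι} (hf : Injective f) : IsWkIncFamily w (S ∘ f) :=
  ⟨fun k => hS.wkInc (f k), hS.pairwise_disjoint.comp_of_injective hf⟩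

theorem IsWkIncFamily.sum_card_le_length {S : ι → Finset (Fin w.length)} (hS : IsWkIncFamily w S)
    (T : Finset ι) : ∑ i ∈ T, (S i).card ≤ w.length := by
  classical
  rw [← card_biUnion (hS.pairwise_disjoint.set_pairwise _)]
  simpa using card_le_univ (T.biUnion S)

theorem bddAbove_greene_set (w : List ℕ) (d : ℕ) :
    BddAbove {N | ∃ S : Fin d → Finset (Fin w.length),
      (∀ i, WkInc w (S i)) ∧ (∀ i j, i ≠ j → Disjoint (S i) (S j)) ∧ N = ∑ i, (S i).card} := by
  refine ⟨w.length, ?_⟩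
  rintro _ ⟨S, hW, hD, rfl⟩
  exact IsWkIncFamily.sum_card_le_length ⟨hW, hD⟩ univ

theorem le_greene {d : ℕ} {S : Fin d → Finset (Fin w.length)} (hS : IsWkIncFamily w S) :
    ∑ i, (S i).card ≤ greene w d :=
  le_csSup (bddAbove_greene_set w d) ⟨S, hS.wkInc, fun _ _ h => hS.pairwise_disjoint h, rfl⟩

theorem greene_le {d X : ℕ}
    (h : ∀ S : Fin d → Finset (Fin w.length), IsWkIncFamily w S → ∑ i, (S i).card ≤ X) :
    greene w d ≤ X := by
  refine csSup_le ⟨0, fun _ => ∅, fun _ => wkInc_empty, by simp, by simp⟩ ?_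
  rintro _ ⟨S, hW, hD, rfl⟩
  exact h S ⟨hW, hD⟩

theorem exists_greene_eq (w : List ℕ) (d : ℕ) : ∃ S : Fin d → Finset (Fin w.length),
    IsWkIncFamily w S ∧ ∑ i, (S i).card = greene w d := by
  obtain ⟨S, hW, hD, hN⟩ := Nat.sSup_mem
    (by exact ⟨0, fun _ => ∅, fun _ => wkInc_empty, by simp, by simp⟩) (bddAbove_greene_set w d)
  exact ⟨S, ⟨hW, hD⟩, hN.symm⟩

theorem greene_zero (w : List ℕ) : greene w 0 = 0 :=
  Nat.le_zero.mp (greene_le fun _ _ => by simp)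

theorem IsWkIncFamily.sum_card_le_greene {S : ι → Finset (Fin w.length)} (hS : IsWkIncFamily w S)
    (T : Finset ι) : ∑ i ∈ T, (S i).card ≤ greene w T.card := by
  calc ∑ i ∈ T, (S i).card = ∑ k, (S (T.equivFin.symm k)).card := by
        rw [Equiv.sum_comp T.equivFin.symm (fun i : T => (S i).card)]
        exact (sum_coe_sort T _).symm
    _ ≤ greene w T.card :=
        le_greene (hS.comp (Subtype.val_injective.comp T.equivFin.symm.injective))

theorem IsWkIncFamily.sum_range_card_le_greene {u : ℕ → Finset (Fin w.length)}
    (hu : IsWkIncFamily w u) (e : ℕ) : ∑ i ∈ range e, (u i).card ≤ greene w e := by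
  simpa using hu.sum_card_le_greene (range e)

end WkIncFamily

-- `P (l + 1) - P l ≤ P (k + 1) - P k` for `k ≤ l`, written without truncated subtraction.
def DiscreteConcave (P : ℕ → ℕ) : Prop :=
  ∀ k l, k ≤ l → P (l + 1) + P k ≤ P l + P (k + 1)

structure IsGreeneFamily (w : List ℕ) (u : ℕ → Finset (Fin w.length)) : Prop
    extends IsWkIncFamily w u where
  card_add_greene : ∀ i, (u i).card + greene w i = greene w (i + 1)

structure GreeneRegular (w : List ℕ) : Prop where
  concave : DiscreteConcave (greene w)
  exists_isGreeneFamily : ∃ u, IsGreeneFamily w u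

theorem greene_nil (d : ℕ) : greene [] d = 0 :=
  Nat.le_zero.mp (greene_le fun S hS => by simpa using hS.sum_card_le_length univ)

theorem greeneRegular_nil : GreeneRegular [] where
  concave _ _ _ := by simp [greene_nil]
  exists_isGreeneFamily :=
    ⟨fun _ => ∅, ⟨fun _ => wkInc_empty, fun _ _ _ => by simp [onFun]⟩, by simp [greene_nil]⟩

theorem greeneRegular_singleton (x : ℕ) : GreeneRegular [x] := by
  let u : ℕ → Finset (Fin [x].length) := fun i => if i = 0 then univ else ∅
  have hu : IsWkIncFamily [x] u := by
    refine ⟨fun _ p _ q _ hpq => ?_, fun i j hij => ?_⟩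
    · have := q.isLt
      simp only [List.length_singleton, Fin.lt_def] at this hpq
      omega
    · rcases eq_or_ne i 0 with rfl | hi
      · simp [u, onFun, Ne.symm hij]
      · simp [u, onFun, hi]
  have hg : ∀ e, greene [x] e = min e 1 := by
    rintro (_ | e)
    · exact greene_zero _
    refine le_antisymm (greene_le fun S hS => ?_) ?_
    · simpa using hS.sum_card_le_length univ
    · simpa [u, sum_range_succ'] using hu.sum_range_card_le_greene (e + 1)
  refine ⟨fun k l hkl => by simp only [hg]; omega, u, hu, fun i => ?_⟩
  rcases i with _ | i <;> simp [u, hg]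

section MaxConv

variable {P Q : ℕ → ℕ}

theorem DiscreteConcave.of_succ (h : ∀ k, P (k + 2) + P k ≤ P (k + 1) + P (k + 1)) :
    DiscreteConcave P := by
  intro k l hkl
  induction l, hkl using Nat.le_induction with
  | base => omega
  | succ l hkl ih =>
    have := h l
    rw [show l + 2 = l + 1 + 1 from rfl] at this
    omega

theorem DiscreteConcave.add (hP : DiscreteConcave P) (hQ : DiscreteConcave Q) :
    DiscreteConcave (P + Q) := fun k l hkl => by
  have := hP k l hkl
  have := hQ k l hkl
  simp only [Pi.add_apply]
  omega

def maxConv (P Q : ℕ → ℕ) (e : ℕ) : ℕ :=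
  (antidiagonal e).sup fun ab => P ab.1 + Q ab.2

theorem le_maxConv {a b e : ℕ} (h : a + b = e) : P a + Q b ≤ maxConv P Q e := by
  unfold maxConv
  exact le_sup (f := fun ab : ℕ × ℕ => P ab.1 + Q ab.2) (mem_antidiagonal.mpr h : (a, b) ∈ _)

theorem maxConv_le {e X : ℕ} (h : ∀ a b, a + b = e → P a + Q b ≤ X) : maxConv P Q e ≤ X :=
  Finset.sup_le fun ab hab => h ab.1 ab.2 (mem_antidiagonal.mp hab)

theorem maxConv_zero : maxConv P Q 0 = P 0 + Q 0 := by
  simp [maxConv]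

theorem maxConv_succ_eq_max (hP : DiscreteConcave P) (hQ : DiscreteConcave Q) {a b e : ℕ}
    (hab : a + b = e) (hopt : P a + Q b = maxConv P Q e) :
    maxConv P Q (e + 1) = max (P (a + 1) + Q b) (P a + Q (b + 1)) := by
  refine le_antisymm (maxConv_le fun a' b' hab' => ?_)
    (max_le (le_maxConv (by omega)) (le_maxConv (by omega)))
  rcases le_or_gt a' a with ha' | ha'
  · obtain ⟨b'', rfl⟩ : ∃ b'', b' = b'' + 1 := ⟨b' - 1, by omega⟩
    have := le_maxConv (P := P) (Q := Q) (show a' + b'' = e by omega)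
    have := hQ b b'' (by omega)
    omega
  · obtain ⟨a'', rfl⟩ : ∃ a'', a' = a'' + 1 := ⟨a' - 1, by omega⟩
    have := le_maxConv (P := P) (Q := Q) (show a'' + b' = e by omega)
    have := hP a a'' (by omega)
    omega

def greedyStep (P Q : ℕ → ℕ) (ab : ℕ × ℕ) : ℕ × ℕ :=
  if P ab.1 + Q (ab.2 + 1) ≤ P (ab.1 + 1) + Q ab.2 then (ab.1 + 1, ab.2) else (ab.1, ab.2 + 1)

def greedySplit (P Q : ℕ → ℕ) (e : ℕ) : ℕ × ℕ :=
  (greedyStep P Q)^[e] (0, 0)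

theorem greedySplit_succ (e : ℕ) :
    greedySplit P Q (e + 1) = greedyStep P Q (greedySplit P Q e) :=
  Function.iterate_succ_apply' _ _ _

theorem greedyStep_fst_add_snd (ab : ℕ × ℕ) :
    (greedyStep P Q ab).1 + (greedyStep P Q ab).2 = ab.1 + ab.2 + 1 := by
  unfold greedyStep
  split_ifs <;> simp only <;> omega

theorem greedySplit_fst_add_snd (e : ℕ) : (greedySplit P Q e).1 + (greedySplit P Q e).2 = e := by
  induction e with
  | zero => rfl
  | succ e ih => rw [greedySplit_succ, greedyStep_fst_add_snd, ih]

theorem greedySplit_monotone : Monotone (greedySplit P Q) := by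
  refine monotone_nat_of_le_succ fun e => ?_
  rw [greedySplit_succ, greedyStep]
  split_ifs <;> simp [Prod.le_def]

theorem greedySplit_optimal (hP : DiscreteConcave P) (hQ : DiscreteConcave Q) (e : ℕ) :
    P (greedySplit P Q e).1 + Q (greedySplit P Q e).2 = maxConv P Q e := by
  induction e with
  | zero => exact maxConv_zero.symm
  | succ e ih =>
    rw [maxConv_succ_eq_max hP hQ (greedySplit_fst_add_snd e) ih, greedySplit_succ, greedyStep]
    split_ifs <;> simp only <;> omega

theorem DiscreteConcave.maxConv (hP : DiscreteConcave P) (hQ : DiscreteConcave Q) :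
    DiscreteConcave (maxConv P Q) := by
  refine .of_succ fun e => ?_
  show _root_.maxConv P Q (e + 1 + 1) + _ ≤ _
  have h0 := greedySplit_optimal hP hQ e
  have h1 := greedySplit_optimal hP hQ (e + 1)
  have h2 := maxConv_succ_eq_max hP hQ (greedySplit_fst_add_snd _) h1
  rw [greedySplit_succ, greedyStep] at h1 h2
  split_ifs at h1 h2 with h <;> simp only at h1 h2
  · have := hP (greedySplit P Q e).1 ((greedySplit P Q e).1 + 1) (by omega)
    omega
  · have := hQ (greedySplit P Q e).2 ((greedySplit P Q e).2 + 1) (by omega)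
    omega

end MaxConv

section Append

variable {w₁ w₂ : List ℕ}

def appendEquiv (w₁ w₂ : List ℕ) : Fin w₁.length ⊕ Fin w₂.length ≃ Fin (w₁ ++ w₂).length :=
  finSumFinEquiv.trans (finCongr List.length_append.symm)

@[simp]
theorem val_appendEquiv_inl (i : Fin w₁.length) : (appendEquiv w₁ w₂ (.inl i) : ℕ) = i := by
  simp [appendEquiv]

@[simp]
theorem val_appendEquiv_inr (j : Fin w₂.length) :
    (appendEquiv w₁ w₂ (.inr j) : ℕ) = w₁.length + j := by
  simp [appendEquiv]

@[simp]
theorem get_appendEquiv_inl (i : Fin w₁.length) :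
    (w₁ ++ w₂).get (appendEquiv w₁ w₂ (.inl i)) = w₁.get i := by
  simp [appendEquiv, List.getElem_append_left]

@[simp]
theorem get_appendEquiv_inr (j : Fin w₂.length) :
    (w₁ ++ w₂).get (appendEquiv w₁ w₂ (.inr j)) = w₂.get j := by
  simp [appendEquiv, List.getElem_append_right]

def restrictLeft (S : Finset (Fin (w₁ ++ w₂).length)) : Finset (Fin w₁.length) :=
  (S.map (appendEquiv w₁ w₂).symm.toEmbedding).toLeft

def restrictRight (S : Finset (Fin (w₁ ++ w₂).length)) : Finset (Fin w₂.length) :=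
  (S.map (appendEquiv w₁ w₂).symm.toEmbedding).toRight

@[simp]
theorem mem_restrictLeft {S : Finset (Fin (w₁ ++ w₂).length)} {i : Fin w₁.length} :
    i ∈ restrictLeft S ↔ appendEquiv w₁ w₂ (.inl i) ∈ S := by
  simp [restrictLeft, mem_map_equiv]

@[simp]
theorem mem_restrictRight {S : Finset (Fin (w₁ ++ w₂).length)} {j : Fin w₂.length} :
    j ∈ restrictRight S ↔ appendEquiv w₁ w₂ (.inr j) ∈ S := by
  simp [restrictRight, mem_map_equiv]

theorem card_restrictLeft_add_card_restrictRight (S : Finset (Fin (w₁ ++ w₂).length)) :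
    (restrictLeft S).card + (restrictRight S).card = S.card := by
  rw [restrictLeft, restrictRight, card_toLeft_add_card_toRight, card_map]

theorem IsWkIncFamily.restrictLeft {ι : Type*} {S : ι → Finset (Fin (w₁ ++ w₂).length)}
    (hS : IsWkIncFamily (w₁ ++ w₂) S) : IsWkIncFamily w₁ fun i => restrictLeft (S i) := by
  refine ⟨fun i p hp q hq hpq => ?_, fun i j hij => disjoint_left.mpr fun p hp hp' => ?_⟩
  · rw [mem_restrictLeft] at hp hq
    simpa using hS.wkInc i _ hp _ hq (by rw [Fin.lt_def] at hpq ⊢; simpa using hpq)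
  · exact disjoint_left.mp (hS.pairwise_disjoint hij) (mem_restrictLeft.mp hp)
      (mem_restrictLeft.mp hp')

theorem IsWkIncFamily.restrictRight {ι : Type*} {S : ι → Finset (Fin (w₁ ++ w₂).length)}
    (hS : IsWkIncFamily (w₁ ++ w₂) S) : IsWkIncFamily w₂ fun i => restrictRight (S i) := by
  refine ⟨fun i p hp q hq hpq => ?_, fun i j hij => disjoint_left.mpr fun p hp hp' => ?_⟩
  · rw [mem_restrictRight] at hp hq
    simpa using hS.wkInc i _ hp _ hq (by rw [Fin.lt_def] at hpq ⊢; simpa using hpq)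
  · exact disjoint_left.mp (hS.pairwise_disjoint hij) (mem_restrictRight.mp hp)
      (mem_restrictRight.mp hp')

theorem WkInc.restrictLeft_eq_empty_or (hcross : ∀ x ∈ w₁, ∀ y ∈ w₂, y < x)
    {S : Finset (Fin (w₁ ++ w₂).length)} (hS : WkInc (w₁ ++ w₂) S) :
    restrictLeft S = ∅ ∨ restrictRight S = ∅ := by
  by_contra! h
  obtain ⟨⟨i, hi⟩, ⟨j, hj⟩⟩ := h
  rw [mem_restrictLeft] at hi
  rw [mem_restrictRight] at hj
  have := hS _ hi _ hj (by rw [Fin.lt_def, val_appendEquiv_inl, val_appendEquiv_inr]; omega)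
  simp only [get_appendEquiv_inl, get_appendEquiv_inr] at this
  exact (hcross _ (List.get_mem _ _) _ (List.get_mem _ _)).not_ge this

theorem disjoint_disjSum {α β : Type*} {s s' : Finset α} {t t' : Finset β} (hs : Disjoint s s')
    (ht : Disjoint t t') : Disjoint (s.disjSum t) (s'.disjSum t') := by
  refine disjoint_left.mpr fun x hx hx' => ?_
  cases x <;> simp only [inl_mem_disjSum, inr_mem_disjSum] at hx hx'
  exacts [disjoint_left.mp hs hx hx', disjoint_left.mp ht hx hx']

def appendJoin (S₁ : Finset (Fin w₁.length)) (S₂ : Finset (Fin w₂.length)) :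
    Finset (Fin (w₁ ++ w₂).length) :=
  (S₁.disjSum S₂).map (appendEquiv w₁ w₂).toEmbedding

theorem card_appendJoin (S₁ : Finset (Fin w₁.length)) (S₂ : Finset (Fin w₂.length)) :
    (appendJoin S₁ S₂).card = S₁.card + S₂.card := by
  rw [appendJoin, card_map, card_disjSum]

theorem IsWkIncFamily.appendJoin {ι : Type*} {S₁ : ι → Finset (Fin w₁.length)}
    {S₂ : ι → Finset (Fin w₂.length)} (h1 : IsWkIncFamily w₁ S₁) (h2 : IsWkIncFamily w₂ S₂)
    (hcross : ∀ i, ∀ p ∈ S₁ i, ∀ q ∈ S₂ i, w₁.get p ≤ w₂.get q) :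
    IsWkIncFamily (w₁ ++ w₂) fun i => appendJoin (S₁ i) (S₂ i) := by
  refine ⟨fun i p hp q hq hpq => ?_, fun i j hij => ?_⟩
  · obtain ⟨x, hx, rfl⟩ := mem_map.mp hp
    obtain ⟨y, hy, rfl⟩ := mem_map.mp hq
    rw [Fin.lt_def] at hpq
    cases x <;> cases y <;>
      simp only [inl_mem_disjSum, inr_mem_disjSum, Equiv.coe_toEmbedding, val_appendEquiv_inl,
        val_appendEquiv_inr, get_appendEquiv_inl, get_appendEquiv_inr] at hx hy hpq ⊢
    · exact h1.wkInc i _ hx _ hy hpq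
    · exact hcross i _ hx _ hy
    · omega
    · exact h2.wkInc i _ hx _ hy (by rw [Fin.lt_def]; omega)
  · exact (disjoint_map _).mpr
      (disjoint_disjSum (h1.pairwise_disjoint hij) (h2.pairwise_disjoint hij))

end Append

section StepSelect

variable {α : Type*} (u : ℕ → Finset α) (a : ℕ → ℕ)

def stepSelect (i : ℕ) : Finset α :=
  if a i < a (i + 1) then u (a i) else ∅

variable {u a}

theorem pairwise_disjoint_stepSelect (hu : Pairwise (Disjoint on u)) (ha : Monotone a) :
    Pairwise (Disjoint on stepSelect u a) := by
  refine (Std.Symm.pairwise_on _).mpr fun i j hij => ?_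
  have : a (i + 1) ≤ a j := ha hij
  simp only [stepSelect]
  split_ifs <;> first | exact hu (by omega) | simp

theorem card_stepSelect_add {P : ℕ → ℕ} (hu : ∀ k, (u k).card + P k = P (k + 1)) {i : ℕ}
    (ha : a i ≤ a (i + 1)) (ha' : a (i + 1) ≤ a i + 1) :
    (stepSelect u a i).card + P (a i) = P (a (i + 1)) := by
  unfold stepSelect
  split_ifs with h
  · rw [hu, show a (i + 1) = a i + 1 by omega]
  · rw [show a (i + 1) = a i by omega, card_empty, zero_add]

theorem IsWkIncFamily.stepSelect {w : List ℕ} {u : ℕ → Finset (Fin w.length)}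
    (hu : IsWkIncFamily w u) (ha : Monotone a) : IsWkIncFamily w (stepSelect u a) := by
  refine ⟨fun i => ?_, pairwise_disjoint_stepSelect hu.pairwise_disjoint ha⟩
  unfold _root_.stepSelect
  split_ifs
  exacts [hu.wkInc _, wkInc_empty]

end StepSelect

section Sums

variable {w₁ w₂ : List ℕ}

theorem greene_append_le (w₁ w₂ : List ℕ) (d : ℕ) :
    greene (w₁ ++ w₂) d ≤ greene w₁ d + greene w₂ d := by
  refine greene_le fun S hS => ?_
  calc ∑ i, (S i).card = ∑ i, (restrictLeft (S i)).card + ∑ i, (restrictRight (S i)).card := by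
        simp only [← sum_add_distrib, card_restrictLeft_add_card_restrictRight]
    _ ≤ greene w₁ d + greene w₂ d :=
        add_le_add (le_greene hS.restrictLeft) (le_greene hS.restrictRight)

theorem greene_append_of_le (hcross : ∀ x ∈ w₁, ∀ y ∈ w₂, x ≤ y) (d : ℕ) :
    greene (w₁ ++ w₂) d = greene w₁ d + greene w₂ d := by
  refine le_antisymm (greene_append_le w₁ w₂ d) ?_
  obtain ⟨S₁, hS₁, hsum₁⟩ := exists_greene_eq w₁ d
  obtain ⟨S₂, hS₂, hsum₂⟩ := exists_greene_eq w₂ d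
  have := le_greene <| hS₁.appendJoin hS₂ fun _ _ _ _ _ =>
    hcross _ (List.get_mem _ _) _ (List.get_mem _ _)
  simpa only [card_appendJoin, sum_add_distrib, hsum₁, hsum₂] using this

theorem GreeneRegular.append_of_le (hcross : ∀ x ∈ w₁, ∀ y ∈ w₂, x ≤ y) (h1 : GreeneRegular w₁)
    (h2 : GreeneRegular w₂) : GreeneRegular (w₁ ++ w₂) := by
  have hg : greene (w₁ ++ w₂) = greene w₁ + greene w₂ := funext (greene_append_of_le hcross)
  obtain ⟨u₁, hu₁⟩ := h1.exists_isGreeneFamily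
  obtain ⟨u₂, hu₂⟩ := h2.exists_isGreeneFamily
  refine ⟨hg ▸ h1.concave.add h2.concave, fun i => appendJoin (u₁ i) (u₂ i),
    hu₁.appendJoin hu₂.toIsWkIncFamily fun _ _ _ _ _ =>
      hcross _ (List.get_mem _ _) _ (List.get_mem _ _), fun i => ?_⟩
  have := hu₁.card_add_greene i
  have := hu₂.card_add_greene i
  simp only [hg, Pi.add_apply, card_appendJoin]
  omega

theorem greene_append_le_maxConv (hcross : ∀ x ∈ w₁, ∀ y ∈ w₂, y < x) (d : ℕ) :
    greene (w₁ ++ w₂) d ≤ maxConv (greene w₁) (greene w₂) d := by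
  classical
  refine greene_le fun S hS => ?_
  let T := univ.filter fun i => restrictRight (S i) = ∅
  have hleft : ∑ i ∈ T, (restrictLeft (S i)).card = ∑ i, (restrictLeft (S i)).card :=
    sum_subset (subset_univ T) fun i _ hi => by
      rw [((hS.wkInc i).restrictLeft_eq_empty_or hcross).resolve_right (by simpa [T] using hi),
        card_empty]
  have hright : ∑ i ∈ Tᶜ, (restrictRight (S i)).card = ∑ i, (restrictRight (S i)).card :=
    sum_subset (subset_univ Tᶜ) fun i _ hi => by
      rw [show restrictRight (S i) = ∅ by simpa [T] using hi, card_empty]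
  calc ∑ i, (S i).card = ∑ i, (restrictLeft (S i)).card + ∑ i, (restrictRight (S i)).card := by
        simp only [← sum_add_distrib, card_restrictLeft_add_card_restrictRight]
    _ ≤ greene w₁ T.card + greene w₂ Tᶜ.card := by
        rw [← hleft, ← hright]
        exact add_le_add (hS.restrictLeft.sum_card_le_greene _)
          (hS.restrictRight.sum_card_le_greene _)
    _ ≤ maxConv (greene w₁) (greene w₂) d := le_maxConv (by simp [card_add_card_compl])

theorem exists_isWkIncFamily_card_add_maxConv {u₁ : ℕ → Finset (Fin w₁.length)}
    {u₂ : ℕ → Finset (Fin w₂.length)} (hc₁ : DiscreteConcave (greene w₁))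
    (hc₂ : DiscreteConcave (greene w₂)) (hu₁ : IsGreeneFamily w₁ u₁) (hu₂ : IsGreeneFamily w₂ u₂) :
    ∃ v : ℕ → Finset (Fin (w₁ ++ w₂).length), IsWkIncFamily (w₁ ++ w₂) v ∧
      ∀ i, (v i).card + maxConv (greene w₁) (greene w₂) i =
        maxConv (greene w₁) (greene w₂) (i + 1) := by
  set g := greedySplit (greene w₁) (greene w₂)
  have hmono : Monotone g := greedySplit_monotone
  have hsum (i : ℕ) : (g i).1 + (g i).2 = i := greedySplit_fst_add_snd i
  have hopt (i : ℕ) : greene w₁ (g i).1 + greene w₂ (g i).2 = maxConv (greene w₁) (greene w₂) i :=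
    greedySplit_optimal hc₁ hc₂ i
  refine ⟨fun i => appendJoin (stepSelect u₁ (fun e => (g e).1) i)
      (stepSelect u₂ (fun e => (g e).2) i),
    (hu₁.stepSelect fun _ _ h => (hmono h).1).appendJoin (hu₂.stepSelect fun _ _ h => (hmono h).2)
      fun i p hp q hq => ?_, fun i => ?_⟩
  all_goals
    have := hsum i
    have := hsum (i + 1)
    obtain ⟨ha, hb⟩ := hmono (Nat.le_add_right i 1)
  · -- the two coordinates never advance at the same step
    simp only [stepSelect] at hp hq
    split_ifs at hp hq <;> first | omega | simp at hp hq
  · have h1 := card_stepSelect_add hu₁.card_add_greene (a := fun e => (g e).1) ha (by omega)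
    have h2 := card_stepSelect_add hu₂.card_add_greene (a := fun e => (g e).2) hb (by omega)
    have := hopt i
    have := hopt (i + 1)
    rw [card_appendJoin]
    omega

theorem GreeneRegular.append_of_lt (hcross : ∀ x ∈ w₁, ∀ y ∈ w₂, y < x) (h1 : GreeneRegular w₁)
    (h2 : GreeneRegular w₂) : GreeneRegular (w₁ ++ w₂) := by
  obtain ⟨u₁, hu₁⟩ := h1.exists_isGreeneFamily
  obtain ⟨u₂, hu₂⟩ := h2.exists_isGreeneFamily
  obtain ⟨v, hv, hcard⟩ := exists_isWkIncFamily_card_add_maxConv h1.concave h2.concave hu₁ hu₂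
  have hsum (e : ℕ) : ∑ i ∈ range e, (v i).card = maxConv (greene w₁) (greene w₂) e :=
    sum_range_induction _ _ (by simp [maxConv_zero, greene_zero]) e fun k _ => by
      rw [← hcard k, add_comm]
  have hg : greene (w₁ ++ w₂) = maxConv (greene w₁) (greene w₂) := funext fun e =>
    le_antisymm (greene_append_le_maxConv hcross e) (hsum e ▸ hv.sum_range_card_le_greene e)
  exact ⟨hg ▸ h1.concave.maxConv h2.concave, v, hv, hg ▸ hcard⟩

end Sums

namespace SimpleGraph

variable {α : Type*} (G : SimpleGraph α)

def ReachableIn (s : Finset α) : α → α → Prop :=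
  Relation.ReflTransGen fun a b => a ∈ s ∧ b ∈ s ∧ G.Adj a b

def ConnectedOn (s : Finset α) : Prop :=
  ∀ x ∈ s, ∀ y ∈ s, G.ReachableIn s x y

def IsP4 (a b c d : α) : Prop :=
  G.Adj a b ∧ G.Adj b c ∧ G.Adj c d ∧ ¬G.Adj a c ∧ ¬G.Adj a d ∧ ¬G.Adj b d

variable {G} {s : Finset α}

theorem ReachableIn.symm {x y : α} (h : G.ReachableIn s x y) : G.ReachableIn s y x :=
  haveI : Std.Symm fun a b => a ∈ s ∧ b ∈ s ∧ G.Adj a b :=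
    ⟨fun _ _ h => ⟨h.2.1, h.1, h.2.2.symm⟩⟩
  Relation.ReflTransGen.stdSymm.symm _ _ h

variable [DecidableEq α] in
theorem ReachableIn.exists_adj_reachableIn_erase {v u : α} (h : G.ReachableIn s v u) (hu : u ∈ s)
    (hne : u ≠ v) : ∃ z ∈ s.erase v, G.Adj v z ∧ G.ReachableIn (s.erase v) z u := by
  induction h with
  | refl => exact absurd rfl hne
  | @tail b c _ hbc ih =>
    by_cases hb : b = v
    · subst hb
      exact ⟨c, mem_erase.mpr ⟨hne, hu⟩, hbc.2.2, .refl⟩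
    · obtain ⟨z, hz, hvz, hzb⟩ := ih hbc.1 hb
      exact ⟨z, hz, hvz, hzb.tail ⟨mem_erase.mpr ⟨hb, hbc.1⟩, mem_erase.mpr ⟨hne, hu⟩, hbc.2.2⟩⟩

theorem ReachableIn.exists_boundary {v y₀ x : α} (h : G.ReachableIn s y₀ x) (hy₀ : G.Adj v y₀)
    (hx : ¬G.Adj v x) : ∃ y ∈ s, ∃ x' ∈ s, G.Adj v y ∧ ¬G.Adj v x' ∧ G.Adj y x' ∧
      G.ReachableIn s x' x := by
  induction h with
  | refl => exact absurd hy₀ hx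
  | @tail b c _ hbc ih =>
    by_cases hb : G.Adj v b
    · exact ⟨b, hbc.1, c, hbc.2.1, hb, hx, hbc.2.2, .refl⟩
    · obtain ⟨y, hy, x', hx', hvy, hvx', hyx', hx'b⟩ := ih hb
      exact ⟨y, hy, x', hx', hvy, hvx', hyx', hx'b.tail hbc⟩

theorem IsP4.compl {a b c d : α} (h : Gᶜ.IsP4 a b c d) : G.IsP4 c a d b := by
  obtain ⟨hab, hbc, hcd, hac, had, hbd⟩ := h
  have hac' : a ≠ c := by rintro rfl; exact had hcd
  have had' : a ≠ d := by rintro rfl; exact hac hcd.symm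
  have hbd' : b ≠ d := by rintro rfl; exact had hab
  simp only [compl_adj, not_and, not_not] at *
  exact ⟨(hac hac').symm, had had', (hbd hbd').symm, hcd.2, fun h => hbc.2 h.symm, hab.2⟩

variable [DecidableEq α]

/-- The induced path is `x' - y - v - z`: `y` and `x'` are adjacent vertices in the component
of a non-neighbour `x` of `v` in `s.erase v` with `y`, but not `x'`, adjacent to `v`, and `z` is a
neighbour of `v` in another component. -/
theorem exists_isP4_of_not_connectedOn_erase {v : α} (hv : v ∈ s) (hG : G.ConnectedOn s)
    (hGc : Gᶜ.ConnectedOn s) (h : ¬G.ConnectedOn (s.erase v)) : ∃ a b c d, G.IsP4 a b c d := by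
  simp only [ConnectedOn, not_forall] at h
  obtain ⟨p, hp, q, hq, hpq⟩ := h
  obtain ⟨x, hx, hvx, -⟩ :=
    (hGc v hv p (mem_of_mem_erase hp)).exists_adj_reachableIn_erase (mem_of_mem_erase hp)
      (ne_of_mem_erase hp)
  obtain ⟨r, hr, hxr⟩ : ∃ r ∈ s.erase v, ¬G.ReachableIn (s.erase v) x r := by
    by_contra! hall
    exact hpq ((hall p hp).symm.trans (hall q hq))
  obtain ⟨z₀, -, hvz₀, hz₀x⟩ :=
    (hG v hv x (mem_of_mem_erase hx)).exists_adj_reachableIn_erase (mem_of_mem_erase hx)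
      (ne_of_mem_erase hx)
  obtain ⟨y, hy, x', hx', hvy, hvx', hyx', hx'x⟩ :=
    hz₀x.exists_boundary hvz₀ ((compl_adj _ _ _).mp hvx).2
  obtain ⟨z, hz, hvz, hzr⟩ :=
    (hG v hv r (mem_of_mem_erase hr)).exists_adj_reachableIn_erase (mem_of_mem_erase hr)
      (ne_of_mem_erase hr)
  have hxz {t : α} (ht : t ∈ s.erase v) (hxt : G.ReachableIn (s.erase v) x t) : ¬G.Adj t z :=
    fun htz => hxr ((hxt.tail ⟨ht, hz, htz⟩).trans hzr)
  have hxx' : G.ReachableIn (s.erase v) x x' := hx'x.symm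
  exact ⟨x', y, v, z, hyx'.symm, hvy.symm, hvz, fun h => hvx' h.symm, hxz hx' hxx',
    hxz hy (hxx'.tail ⟨hx', hy, hyx'.symm⟩)⟩

theorem exists_isP4_of_connectedOn (hs : 2 ≤ s.card) (hG : G.ConnectedOn s)
    (hGc : Gᶜ.ConnectedOn s) : ∃ a b c d, G.IsP4 a b c d := by
  induction s using Finset.strongInduction with
  | H s ih =>
  rcases hs.eq_or_lt with hs | hs
  · -- on two vertices `G` and `Gᶜ` cannot both be connected
    obtain ⟨u, v, huv, rfl⟩ := card_eq_two.mp hs.symm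
    have hu : u ∈ ({u, v} : Finset α) := by simp
    have hv : v ∈ ({u, v} : Finset α) := by simp
    obtain ⟨z, hz, hGuz, -⟩ := (hG u hu v hv).exists_adj_reachableIn_erase hv huv.symm
    obtain ⟨z', hz', hGcuz', -⟩ := (hGc u hu v hv).exists_adj_reachableIn_erase hv huv.symm
    simp only [erase_insert_eq_erase, mem_singleton, huv, not_false_eq_true, erase_eq_of_notMem]
      at hz hz'
    subst hz hz'
    exact absurd hGuz ((compl_adj _ _ _).mp hGcuz').2
  obtain ⟨v, hv⟩ := card_pos.mp (by omega : 0 < s.card)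
  by_cases hGv : G.ConnectedOn (s.erase v)
  · by_cases hGcv : Gᶜ.ConnectedOn (s.erase v)
    · exact ih _ (erase_ssubset hv) (by rw [card_erase_of_mem hv]; omega) hGv hGcv
    · obtain ⟨a, b, c, d, h⟩ :=
        exists_isP4_of_not_connectedOn_erase hv hGc (by rwa [compl_compl]) hGcv
      exact ⟨c, a, d, b, h.compl⟩
  · exact exists_isP4_of_not_connectedOn_erase hv hG hGc hGv

end SimpleGraph

section InversionGraph

variable {ι β : Type*} [LinearOrder ι] [LinearOrder β]

def inversionGraph (f : ι → β) : SimpleGraph ι :=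
  SimpleGraph.fromRel fun p q => p < q ∧ f q < f p

theorem inversionGraph_adj {f : ι → β} {p q : ι} :
    (inversionGraph f).Adj p q ↔ (p < q ∧ f q < f p) ∨ (q < p ∧ f p < f q) := by
  rw [inversionGraph, SimpleGraph.fromRel_adj, and_iff_right_iff_imp]
  rintro (⟨h, -⟩ | ⟨h, -⟩)
  exacts [h.ne, h.ne']

theorem inversionGraph_adj_of_lt {f : ι → β} {p q : ι} (hpq : p < q) :
    (inversionGraph f).Adj p q ↔ f q < f p := by
  simp [inversionGraph_adj, hpq, hpq.not_gt]

instance (f : ι → β) : DecidableRel (inversionGraph f).Adj :=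
  fun _ _ => decidable_of_iff' _ inversionGraph_adj

instance {α : Type*} (G : SimpleGraph α) [DecidableRel G.Adj] (a b c d : α) :
    Decidable (G.IsP4 a b c d) := by
  unfold SimpleGraph.IsP4
  infer_instance

theorem eq_p3142_or_eq_p2413_of_isP4 (π g : Equiv.Perm (Fin 4))
    (h : (inversionGraph π).IsP4 (g 0) (g 1) (g 2) (g 3)) : π = p3142 ∨ π = p2413 := by
  revert π g
  decide

theorem inversionGraph_congr {γ : Type*} [LinearOrder γ] {f : ι → β} {g : ι → γ}
    (h : ∀ i j, f i < f j ↔ g i < g j) : inversionGraph f = inversionGraph g := by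
  ext p q
  simp only [inversionGraph_adj, h]

theorem comap_inversionGraph {κ : Type*} [LinearOrder κ] {F : κ → ι} (hF : StrictMono F)
    (f : ι → β) : (inversionGraph f).comap F = inversionGraph (f ∘ F) := by
  ext p q
  simp only [SimpleGraph.comap_adj, inversionGraph_adj, hF.lt_iff_lt, comp_apply]

theorem inversionGraph_adj_or_adj {f : ι → β} {i j k : ι} (hij : i < j) (hjk : j < k)
    (h : (inversionGraph f).Adj i k) :
    (inversionGraph f).Adj i j ∨ (inversionGraph f).Adj j k := by
  rw [inversionGraph_adj_of_lt (hij.trans hjk)] at h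
  rw [inversionGraph_adj_of_lt hij, inversionGraph_adj_of_lt hjk]
  by_contra! hc
  exact (hc.1.trans hc.2).not_gt h

theorem compl_inversionGraph_adj_or_adj {f : ι → β} {i j k : ι} (hij : i < j) (hjk : j < k)
    (h : (inversionGraph f)ᶜ.Adj i k) :
    (inversionGraph f)ᶜ.Adj i j ∨ (inversionGraph f)ᶜ.Adj j k := by
  simp only [SimpleGraph.compl_adj, inversionGraph_adj_of_lt, hij, hjk, hij.trans hjk, hij.ne,
    hjk.ne, (hij.trans hjk).ne, ne_eq, not_false_eq_true, true_and, not_lt] at h ⊢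
  by_contra! hc
  exact (h.trans_lt (hc.2.trans hc.1)).false

end InversionGraph

section Cut

variable {m : ℕ} {G : SimpleGraph (Fin m)}

theorem SimpleGraph.ReachableIn.of_le
    (hstr : ∀ i j k, i < j → j < k → G.Adj i k → G.Adj i j ∨ G.Adj j k)
    {z j : Fin m} (hz : ∀ i, z ≤ i) (h : G.ReachableIn univ z j) {i : Fin m} (hij : i ≤ j) :
    G.ReachableIn univ z i := by
  induction h generalizing i with
  | refl =>
    rw [le_antisymm hij (hz i)]
    exact .refl
  | @tail b c hzb hbc ih =>
    rcases le_or_gt i b with hib | hbi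
    · exact ih hib
    rcases hij.lt_or_eq with hic | rfl
    · rcases hstr b i c hbi hic hbc.2.2 with h | h
      · exact hzb.tail ⟨mem_univ _, mem_univ _, h⟩
      · exact (hzb.tail hbc).tail ⟨mem_univ _, mem_univ _, h.symm⟩
    · exact hzb.tail hbc

theorem exists_cut_of_not_connectedOn
    (hstr : ∀ i j k, i < j → j < k → G.Adj i k → G.Adj i j ∨ G.Adj j k)
    (h : ¬G.ConnectedOn univ) :
    ∃ k, 0 < k ∧ k < m ∧ ∀ i j : Fin m, (i : ℕ) < k → k ≤ j → ¬G.Adj i j := by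
  classical
  have hm : 0 < m := by
    rcases m with _ | m
    · exact absurd (fun x => x.elim0) h
    · omega
  let z : Fin m := ⟨0, hm⟩
  have hz (i : Fin m) : z ≤ i := Nat.zero_le _
  have hex : ∃ k, ∃ hk : k < m, ¬G.ReachableIn univ z ⟨k, hk⟩ := by
    by_contra! hall
    exact h fun x _ y _ => (hall x x.2).symm.trans (hall y y.2)
  obtain ⟨hk, hzk⟩ := Nat.find_spec hex
  refine ⟨Nat.find hex, Nat.pos_of_ne_zero fun h0 => hzk ?_, hk, fun i j hi hj hij => hzk ?_⟩
  · simp only [h0]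
    exact .refl
  · have hzi : G.ReachableIn univ z i := by
      by_contra hzi
      exact Nat.find_min hex hi ⟨i.2, hzi⟩
    exact SimpleGraph.ReachableIn.of_le hstr hz (hzi.tail ⟨mem_univ _, mem_univ _, hij⟩) hj

end Cut

theorem exists_perm_lt_iff_lt {m : ℕ} {β : Type*} [LinearOrder β] {v : Fin m → β}
    (hv : Injective v) : ∃ π : Equiv.Perm (Fin m), ∀ i j, v i < v j ↔ π i < π j := by
  let σ := Tuple.sort v
  have hσ : StrictMono (v ∘ σ) :=
    (Tuple.monotone_sort v).strictMono_of_injective (hv.comp σ.injective)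
  refine ⟨σ.symm, fun i j => ?_⟩
  conv_lhs => rw [← σ.apply_symm_apply i, ← σ.apply_symm_apply j]
  exact hσ.lt_iff_lt

theorem SimpleGraph.IsP4.injective {α : Type*} {G : SimpleGraph α} {a b c d : α}
    (h : G.IsP4 a b c d) : Injective ![a, b, c, d] := by
  obtain ⟨hab, hbc, hcd, hac, had, hbd⟩ := h
  have : a ≠ c := by rintro rfl; exact had hcd
  have : a ≠ d := by rintro rfl; exact hac hcd.symm
  have : b ≠ d := by rintro rfl; exact had hab
  have := hab.ne
  have := hbc.ne
  have := hcd.ne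
  intro i j hij
  fin_cases i <;> fin_cases j <;> simp_all [eq_comm]

section SeparableWord

variable {w : List ℕ}

theorem containsPattern_of_isP4 (hnd : w.Nodup) {a b c d : Fin w.length}
    (h : (inversionGraph w.get).IsP4 a b c d) :
    ContainsPattern p3142 w ∨ ContainsPattern p2413 w := by
  -- sort the four positions, then read off the relative order of their values
  obtain ⟨τ, hτ⟩ := exists_perm_lt_iff_lt h.injective
  let F := ![a, b, c, d] ∘ τ.symm
  have hF : StrictMono F := fun x y hxy => by
    simpa only [F, comp_apply, hτ, Equiv.apply_symm_apply] using hxy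
  obtain ⟨π, hπ⟩ := exists_perm_lt_iff_lt (v := w.get ∘ F)
    ((hnd.injective_get).comp hF.injective)
  have hG : (inversionGraph w.get).comap F = inversionGraph π := by
    rw [comap_inversionGraph hF, inversionGraph_congr hπ]
  have hP4 : (inversionGraph π).IsP4 (τ 0) (τ 1) (τ 2) (τ 3) := by
    rw [← hG]
    simpa [SimpleGraph.IsP4, F] using h
  rcases eq_p3142_or_eq_p2413_of_isP4 π τ hP4 with rfl | rfl
  exacts [.inl ⟨F, hF, fun j k => ⟨hπ j k, hπ k j⟩⟩, .inr ⟨F, hF, fun j k => ⟨hπ j k, hπ k j⟩⟩]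

theorem exists_append_of_cut {r : ℕ → ℕ → Prop} {k : ℕ} (hk₀ : 0 < k) (hk : k < w.length)
    (h : ∀ i j : Fin w.length, (i : ℕ) < k → k ≤ j → r (w.get i) (w.get j)) :
    ∃ w₁ w₂, w = w₁ ++ w₂ ∧ w₁ ≠ [] ∧ w₂ ≠ [] ∧ ∀ x ∈ w₁, ∀ y ∈ w₂, r x y := by
  refine ⟨w.take k, w.drop k, (w.take_append_drop k).symm,
    List.ne_nil_of_length_pos (by simp only [List.length_take]; omega),
    List.ne_nil_of_length_pos (by simpa using hk), fun x hx y hy => ?_⟩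
  obtain ⟨i, hi, rfl⟩ := List.mem_take_iff_getElem.mp hx
  obtain ⟨j, hj, rfl⟩ := List.mem_drop_iff_getElem.mp hy
  exact h ⟨i, by omega⟩ ⟨k + j, by omega⟩ (by simp only; omega) (by simp)

def SeparableWord (w : List ℕ) : Prop :=
  ¬ContainsPattern p3142 w ∧ ¬ContainsPattern p2413 w

theorem ContainsPattern.of_sublist {m : ℕ} {π : Equiv.Perm (Fin m)} {w' : List ℕ}
    (h : ContainsPattern π w) (hw : w.Sublist w') : ContainsPattern π w' := by
  obtain ⟨e, he⟩ := List.sublist_iff_exists_fin_orderEmbedding_get_eq.mp hw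
  obtain ⟨f, hf, hπ⟩ := h
  exact ⟨e ∘ f, e.strictMono.comp hf, fun j k => by simpa only [comp_apply, ← he] using hπ j k⟩

theorem SeparableWord.of_sublist {w' : List ℕ} (h : SeparableWord w') (hw : w.Sublist w') :
    SeparableWord w :=
  ⟨fun h' => h.1 (h'.of_sublist hw), fun h' => h.2 (h'.of_sublist hw)⟩

theorem SeparableWord.exists_append (hnd : w.Nodup) (hsep : SeparableWord w)
    (hlen : 2 ≤ w.length) :
    ∃ w₁ w₂, w = w₁ ++ w₂ ∧ w₁ ≠ [] ∧ w₂ ≠ [] ∧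
      ((∀ x ∈ w₁, ∀ y ∈ w₂, x < y) ∨ ∀ x ∈ w₁, ∀ y ∈ w₂, y < x) := by
  by_cases hG : (inversionGraph w.get).ConnectedOn univ
  · by_cases hGc : (inversionGraph w.get)ᶜ.ConnectedOn univ
    · obtain ⟨a, b, c, d, h⟩ :=
        SimpleGraph.exists_isP4_of_connectedOn (by simpa using hlen) hG hGc
      exact ((containsPattern_of_isP4 hnd h).elim hsep.1 hsep.2).elim
    obtain ⟨k, hk₀, hk, hcut⟩ := exists_cut_of_not_connectedOn
      (fun _ _ _ => compl_inversionGraph_adj_or_adj) hGc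
    obtain ⟨w₁, w₂, hw, hw₁, hw₂, h⟩ := exists_append_of_cut (r := fun x y => y < x) hk₀ hk
      fun i j hi hj => by
        have hij : i < j := by rw [Fin.lt_def]; omega
        simpa [inversionGraph_adj_of_lt hij, hij.ne] using hcut i j hi hj
    exact ⟨w₁, w₂, hw, hw₁, hw₂, .inr h⟩
  obtain ⟨k, hk₀, hk, hcut⟩ := exists_cut_of_not_connectedOn
    (fun _ _ _ => inversionGraph_adj_or_adj) hG
  obtain ⟨w₁, w₂, hw, hw₁, hw₂, h⟩ := exists_append_of_cut (r := (· < ·)) hk₀ hk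
    fun i j hi hj => by
      have hij : i < j := by rw [Fin.lt_def]; omega
      have := hcut i j hi hj
      rw [inversionGraph_adj_of_lt hij, not_lt] at this
      exact this.lt_of_ne (hnd.injective_get.ne hij.ne)
  exact ⟨w₁, w₂, hw, hw₁, hw₂, .inl h⟩

theorem GreeneRegular.of_separableWord (hnd : w.Nodup) (hsep : SeparableWord w) :
    GreeneRegular w := by
  induction hn : w.length using Nat.strong_induction_on generalizing w with
  | _ n ih =>
  rcases w with _ | ⟨x, _ | ⟨y, w⟩⟩
  · exact greeneRegular_nil
  · exact greeneRegular_singleton x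
  obtain ⟨w₁, w₂, hw, hw₁, hw₂, h⟩ := hsep.exists_append hnd (by simp)
  rw [hw] at hnd hsep hn ⊢
  rw [List.length_append] at hn
  have hlen₁ : w₁.length < n := by have := List.length_pos_iff.mpr hw₂; omega
  have hlen₂ : w₂.length < n := by have := List.length_pos_iff.mpr hw₁; omega
  have h₁ := ih _ hlen₁ (hnd.sublist (List.sublist_append_left _ _))
    (hsep.of_sublist (List.sublist_append_left _ _)) rfl
  have h₂ := ih _ hlen₂ (hnd.sublist (List.sublist_append_right _ _))
    (hsep.of_sublist (List.sublist_append_right _ _)) rfl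
  exact h.elim (fun h => .append_of_le (fun x hx y hy => (h x hx y hy).le) h₁ h₂)
    (fun h => .append_of_lt h h₁ h₂)

end SeparableWord

theorem length_permWord {n : ℕ} (σ : Equiv.Perm (Fin n)) : (permWord σ).length = n :=
  List.length_ofFn

theorem nodup_permWord {n : ℕ} (σ : Equiv.Perm (Fin n)) : (permWord σ).Nodup :=
  List.nodup_ofFn.mpr fun i j h => σ.injective (Fin.ext (by simpa using h))

theorem WkInc.incSubseq_map_permWord {n : ℕ} {σ : Equiv.Perm (Fin n)}
    {S : Finset (Fin (permWord σ).length)} (hS : WkInc (permWord σ) S) :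
    IncSubseq σ (S.map (finCongr (length_permWord σ)).toEmbedding) := by
  intro p hp q hq hpq
  rw [mem_map_equiv] at hp hq
  have := hS _ hp _ hq (by rw [Fin.lt_def] at hpq ⊢; simpa using hpq)
  simp only [permWord, List.get_eq_getElem, List.getElem_ofFn, add_le_add_iff_right,
    Fin.val_fin_le] at this
  exact lt_of_le_of_ne this (σ.injective.ne hpq.ne)

theorem exists_disjoint_increasing_family_of_separable_general {n : ℕ} (σ : Equiv.Perm (Fin n))
    (hsep : Separable σ) (d : ℕ) :
    ∃ u : Fin d → Finset (Fin n),
      (∀ i, IncSubseq σ (u i)) ∧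
      (∀ i j, i ≠ j → Disjoint (u i) (u j)) ∧
      (∀ i : Fin d, (u i).card = shapePart (permWord σ) i) := by
  obtain ⟨u, hu⟩ := (GreeneRegular.of_separableWord (nodup_permWord σ) hsep).exists_isGreeneFamily
  refine ⟨fun i => (u i).map (finCongr (length_permWord σ)).toEmbedding,
    fun i => (hu.wkInc i).incSubseq_map_permWord, fun i j hij => ?_, fun i => ?_⟩
  · exact (disjoint_map _).mpr (hu.pairwise_disjoint (Fin.val_injective.ne hij))
  · rw [card_map, shapePart, ← hu.card_add_greene]
    omega

/-- A separable permutation of shape `λ` has, for every `d ≥ 1`, a family of `d`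
pairwise disjoint increasing subsequences whose lengths are exactly `λ₁, …, λ_d`. -/
theorem exists_disjoint_increasing_family_of_separable {n : ℕ} (σ : Equiv.Perm (Fin n))
    (hsep : Separable σ) (d : ℕ) (hd : 1 ≤ d) :
    ∃ u : Fin d → Finset (Fin n),
      (∀ i, IncSubseq σ (u i)) ∧
      (∀ i j, i ≠ j → Disjoint (u i) (u j)) ∧
      (∀ i : Fin d, (u i).card = shapePart (permWord σ) i) :=
  exists_disjoint_increasing_family_of_separable_general σ hsep d
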